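/- arXiv:2509.21462 — 4 statements merged into one kernel-verified Lean document; each statement's English description precedes it below -/
import Mathlib

section
/- For every dimension d ≥ 2, there does not exist a unitary U ∈ SU(d) and a nonzero vector ψ ∈ ℂ^d such that V·U·ψ = U·Vᵀ·ψ for all V ∈ SU(d), where Vᵀ denotes the transpose of V. -/
/-!
Both sides of `V * U *ᵥ ψ = U * Vᵀ *ᵥ ψ` are linear in `V`, and `SU(d)` spans all of
`Matrix (Fin d) (Fin d) ℂ` (every unitary is a scalar multiple of a special unitary, and unitaries
span any unital C⋆-algebra). So the identity holds for every matrix `M`. Taking `M` a matrix unit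
`Eᵢₗ` with `ψ i ≠ 0` gives `Eᵢₗ (Uψ) = ψ i • U eₗ`, whose `k`-th entry for `k ≠ i` says `U k l = 0`.
Hence `U` has a zero row when `d ≥ 2`, contradicting `det U = 1`.
-/

open Matrix

/-- The set of special unitary `d × d` complex matrices. -/
def SU (d : ℕ) : Set (Matrix (Fin d) (Fin d) ℂ) :=
  {V | V ∈ Matrix.unitaryGroup (Fin d) ℂ ∧ V.det = 1}

lemma RCLike.mem_unitary_of_norm_eq_one {𝕜 : Type*} [RCLike 𝕜] {z : 𝕜} (hz : ‖z‖ = 1) :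
    z ∈ unitary 𝕜 := by
  rw [Unitary.mem_iff_star_mul_self, RCLike.star_def, RCLike.conj_mul, hz]
  norm_num

lemma exists_smul_mem_SU_of_mem_unitaryGroup {d : ℕ} {u : Matrix (Fin d) (Fin d) ℂ}
    (hu : u ∈ unitaryGroup (Fin d) ℂ) : ∃ c : ℂ, ∃ V ∈ SU d, u = c • V := by
  rcases Nat.eq_zero_or_pos d with rfl | hd
  · exact ⟨1, u, ⟨hu, det_isEmpty⟩, (one_smul ℂ u).symm⟩
  obtain ⟨z, hz⟩ := IsAlgClosed.exists_pow_nat_eq u.det hd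
  have hz_norm : ‖z‖ = 1 := by
    rw [← pow_eq_one_iff_of_nonneg (norm_nonneg z) hd.ne', ← norm_pow, hz]
    exact CStarRing.norm_of_mem_unitary (det_of_mem_unitary hu)
  have hz0 : z ≠ 0 := norm_ne_zero_iff.mp (by rw [hz_norm]; exact one_ne_zero)
  refine ⟨z, z⁻¹ • u, ⟨Unitary.smul_mem_of_mem ?_ hu, ?_⟩, ?_⟩
  · exact RCLike.mem_unitary_of_norm_eq_one (by rw [norm_inv, hz_norm, inv_one])
  · rw [det_smul, Fintype.card_fin, inv_pow, hz, inv_mul_cancel₀ (hz ▸ pow_ne_zero d hz0)]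
  · rw [smul_smul, mul_inv_cancel₀ hz0, one_smul]

open scoped Matrix.Norms.L2Operator in
lemma span_SU_eq_top (d : ℕ) : Submodule.span ℂ (SU d) = ⊤ := by
  rw [eq_top_iff, ← CStarAlgebra.span_unitary, Submodule.span_le]
  intro u hu
  obtain ⟨c, V, hV, rfl⟩ := exists_smul_mem_SU_of_mem_unitaryGroup hu
  exact Submodule.smul_mem _ c (Submodule.subset_span hV)

lemma mul_mulVec_eq_of_forall_mem_SU {d : ℕ} {U : Matrix (Fin d) (Fin d) ℂ} {ψ : Fin d → ℂ}
    (h : ∀ V ∈ SU d, (V * U) *ᵥ ψ = (U * Vᵀ) *ᵥ ψ) (M : Matrix (Fin d) (Fin d) ℂ) :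
    (M * U) *ᵥ ψ = (U * Mᵀ) *ᵥ ψ := by
  have hM : M ∈ Submodule.span ℂ (SU d) := by
    rw [span_SU_eq_top]
    exact Submodule.mem_top
  induction hM using Submodule.span_induction with
  | mem V hV => exact h V hV
  | zero => simp
  | add A B _ _ hA hB => simp only [add_mul, transpose_add, mul_add, add_mulVec, hA, hB]
  | smul c A _ hA => simp only [smul_mul, transpose_smul, Matrix.mul_smul, smul_mulVec, hA]

lemma row_eq_zero_of_forall_mul_mulVec_eq {n R : Type*} [Fintype n] [DecidableEq n]
    [CommSemiring R] [NoZeroDivisors R] {U : Matrix n n R} {ψ : n → R}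
    (h : ∀ M : Matrix n n R, (M * U) *ᵥ ψ = (U * Mᵀ) *ᵥ ψ) {i k : n} (hψ : ψ i ≠ 0)
    (hki : k ≠ i) : U k = 0 := by
  funext l
  have hkl := congrFun (h (single i l 1)) k
  rw [← mulVec_mulVec, ← mulVec_mulVec, transpose_single, single_mulVec_eq, single_mulVec_eq,
    mulVec_smul, mulVec_single_one] at hkl
  simpa [hki, hψ] using hkl

/-- For every dimension `d ≥ 2`, there is no `U ∈ SU(d)` and nonzero `ψ ∈ ℂ^d` with
`V • U • ψ = U • Vᵀ • ψ` for all `V ∈ SU(d)`. -/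
theorem no_transpose_intertwiner (d : ℕ) (hd : 2 ≤ d) :
    ¬ ∃ (U : Matrix (Fin d) (Fin d) ℂ) (ψ : Fin d → ℂ), U ∈ SU d ∧ ψ ≠ 0 ∧
      ∀ V ∈ SU d, (V * U) *ᵥ ψ = (U * Vᵀ) *ᵥ ψ := by
  rintro ⟨U, ψ, ⟨-, hUdet⟩, hψ, H⟩
  obtain ⟨i, hψi⟩ := Function.ne_iff.mp hψ
  have : Nontrivial (Fin d) := Fin.nontrivial_iff_two_le.mpr hd
  obtain ⟨k, hki⟩ := exists_ne i
  have hrow := row_eq_zero_of_forall_mul_mulVec_eq (mul_mulVec_eq_of_forall_mem_SU H) hψi hki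
  exact one_ne_zero (hUdet ▸ det_eq_zero_of_row_eq_zero k (congrFun hrow))
end

section
/- If ψ ∈ ℂ^d ⊗ ℂ^d satisfies (V ⊗ 1)ψ = (1 ⊗ Vᵀ)ψ for all V ∈ SU(d), then ψ is a scalar multiple of the maximally entangled (EPR) vector ∑_{i=0}^{d-1} e_i ⊗ e_i. -/
open Matrix TensorProduct

/-- coefficient functional on the tensor product -/
noncomputable def coeffL (d : ℕ) (k l : Fin d) :
    (Fin d → ℂ) ⊗[ℂ] (Fin d → ℂ) →ₗ[ℂ] ℂ :=
  TensorProduct.lift ((LinearMap.mul ℂ ℂ).compl₁₂ (LinearMap.proj k) (LinearMap.proj l))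

lemma coeffL_tmul (d : ℕ) (k l : Fin d) (x y : Fin d → ℂ) :
    coeffL d k l (x ⊗ₜ[ℂ] y) = x k * y l := rfl

lemma coeffA (d : ℕ) (V : Matrix (Fin d) (Fin d) ℂ) (k l : Fin d)
    (ψ : (Fin d → ℂ) ⊗[ℂ] (Fin d → ℂ)) :
    coeffL d k l (TensorProduct.map (Matrix.toLin' V) LinearMap.id ψ)
      = ∑ i, V k i * coeffL d i l ψ := by
  induction ψ using TensorProduct.induction_on with
  | zero => simp
  | tmul x y =>
    simp only [TensorProduct.map_tmul, LinearMap.id_coe, id_eq, coeffL_tmul,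
      Matrix.toLin'_apply, Matrix.mulVec, dotProduct]
    rw [Finset.sum_mul]
    exact Finset.sum_congr rfl fun i _ => by ring
  | add a b ha hb => simp [ha, hb, Finset.sum_add_distrib, mul_add]

lemma coeffB (d : ℕ) (V : Matrix (Fin d) (Fin d) ℂ) (k l : Fin d)
    (ψ : (Fin d → ℂ) ⊗[ℂ] (Fin d → ℂ)) :
    coeffL d k l (TensorProduct.map LinearMap.id (Matrix.toLin' Vᵀ) ψ)
      = ∑ j, coeffL d k j ψ * V j l := by
  induction ψ using TensorProduct.induction_on with
  | zero => simp
  | tmul x y =>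
    simp only [TensorProduct.map_tmul, LinearMap.id_coe, id_eq, coeffL_tmul,
      Matrix.toLin'_apply, Matrix.mulVec, dotProduct]
    rw [Finset.mul_sum]
    exact Finset.sum_congr rfl fun j _ => by rw [Matrix.transpose_apply]; ring
  | add a b ha hb => simp [ha, hb, Finset.sum_add_distrib, add_mul]

/-- If `ψ ∈ ℂ^d ⊗ ℂ^d` satisfies `(V ⊗ 1)ψ = (1 ⊗ Vᵀ)ψ` for all `V ∈ SU(d)`,
then `ψ` is a scalar multiple of the EPR vector `∑ i, e_i ⊗ e_i`. -/
theorem transpose_invariant_is_EPR (d : ℕ) (ψ : (Fin d → ℂ) ⊗[ℂ] (Fin d → ℂ))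
    (h : ∀ V ∈ SU d,
      TensorProduct.map (Matrix.toLin' V) LinearMap.id ψ
        = TensorProduct.map LinearMap.id (Matrix.toLin' Vᵀ) ψ) :
    ∃ c : ℂ, ψ = c • ∑ i : Fin d, (Pi.single i (1 : ℂ)) ⊗ₜ[ℂ] (Pi.single i (1 : ℂ)) := by
  classical
  set M : Matrix (Fin d) (Fin d) ℂ := fun i j => coeffL d i j ψ with hM
  have hcomm : ∀ V ∈ SU d, ∀ k l : Fin d,
      ∑ i, V k i * M i l = ∑ j, M k j * V j l := by
    intro V hV k l
    have := congrArg (coeffL d k l) (h V hV)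
    rwa [coeffA, coeffB] at this
  -- off-diagonal entries vanish
  have hoff : ∀ i j : Fin d, i ≠ j → M i j = 0 := by
    intro i j hij
    set v : Fin d → ℂ := fun k => if k = i then Complex.I else if k = j then -Complex.I else 1
      with hv
    have hvu : Matrix.diagonal v ∈ Matrix.unitaryGroup (Fin d) ℂ := by
      rw [Matrix.mem_unitaryGroup_iff]
      rw [Matrix.star_eq_conjTranspose, Matrix.diagonal_conjTranspose,
        Matrix.diagonal_mul_diagonal]
      ext a c
      rcases eq_or_ne a c with rfl | hac
      · rw [Matrix.diagonal_apply_eq, Matrix.one_apply_eq]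
        show v a * star (v a) = 1
        by_cases h1 : a = i
        · simp [hv, h1, Ne.symm hij, Complex.conj_I, Complex.I_mul_I]
        · by_cases h2 : a = j <;>
            simp [hv, h1, h2, Ne.symm hij, Complex.conj_I, Complex.I_mul_I]
      · rw [Matrix.diagonal_apply_ne _ hac, Matrix.one_apply_ne hac]
    have hvd : (Matrix.diagonal v).det = 1 := by
      rw [Matrix.det_diagonal]
      have : ∀ k, v k = (if k = i then Complex.I else 1) * (if k = j then -Complex.I else 1) := by
        intro k
        by_cases h1 : k = i
        · subst h1; simp [hv, hij, Ne.symm hij]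
        · by_cases h2 : k = j <;> simp [hv, h1, h2, Ne.symm hij]
      rw [Finset.prod_congr rfl fun k _ => this k, Finset.prod_mul_distrib,
        Finset.prod_ite_eq' Finset.univ i (fun _ => Complex.I),
        Finset.prod_ite_eq' Finset.univ j (fun _ => -Complex.I)]
      simp [Complex.I_mul_I]
    have hc := hcomm (Matrix.diagonal v) ⟨hvu, hvd⟩ i j
    simp only [Matrix.diagonal_apply, ite_mul, zero_mul, mul_ite, mul_zero,
      Finset.sum_ite_eq, Finset.sum_ite_eq', Finset.mem_univ, if_true] at hc
    have hvi : v i = Complex.I := by simp [hv]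
    have hvj : v j = -Complex.I := by simp [hv, (Ne.symm hij)]
    rw [hvi, hvj] at hc
    have h2 : (2 * Complex.I) * M i j = 0 := by linear_combination hc
    rcases mul_eq_zero.1 h2 with h3 | h3
    · exact absurd h3 (by simp [Complex.I_ne_zero])
    · exact h3
  -- diagonal entries are equal
  have hdiageq : ∀ i j : Fin d, i ≠ j → M j j = M i i := by
    intro i j hij
    set σ : Equiv.Perm (Fin d) := Equiv.swap i j with hσ
    set P : Matrix (Fin d) (Fin d) ℂ := σ.permMatrix ℂ with hP
    set w : Fin d → ℂ := fun k => if k = i then (-1 : ℂ) else 1 with hw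
    set S : Matrix (Fin d) (Fin d) ℂ := P * Matrix.diagonal w with hS
    have hPu : P ∈ Matrix.unitaryGroup (Fin d) ℂ := by
      rw [Matrix.mem_unitaryGroup_iff]
      have hstar : star P = Pᵀ := by
        ext a b
        simp only [Matrix.star_eq_conjTranspose, Matrix.conjTranspose_apply,
          Matrix.transpose_apply, hP, Equiv.Perm.permMatrix, PEquiv.toMatrix_apply]
        split <;> simp
      rw [hstar]
      have : Pᵀ = (σ.symm).toPEquiv.toMatrix := by
        rw [Equiv.toPEquiv_symm, PEquiv.toMatrix_symm]
      rw [this, hP]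
      show (σ.toPEquiv.toMatrix : Matrix (Fin d) (Fin d) ℂ) * _ = 1
      rw [← PEquiv.toMatrix_trans, ← Equiv.toPEquiv_trans, Equiv.self_trans_symm,
        Equiv.toPEquiv_refl, PEquiv.toMatrix_refl]
    have hwu : Matrix.diagonal w ∈ Matrix.unitaryGroup (Fin d) ℂ := by
      rw [Matrix.mem_unitaryGroup_iff]
      rw [Matrix.star_eq_conjTranspose, Matrix.diagonal_conjTranspose,
        Matrix.diagonal_mul_diagonal]
      ext a c
      rcases eq_or_ne a c with rfl | hac
      · rw [Matrix.diagonal_apply_eq, Matrix.one_apply_eq]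
        show w a * star (w a) = 1
        by_cases h1 : a = i <;> simp [hw, h1]
      · rw [Matrix.diagonal_apply_ne _ hac, Matrix.one_apply_ne hac]
    have hSu : S ∈ Matrix.unitaryGroup (Fin d) ℂ := mul_mem hPu hwu
    have hSd : S.det = 1 := by
      rw [hS, Matrix.det_mul, Matrix.det_permutation, Equiv.Perm.sign_swap hij,
        Matrix.det_diagonal, Finset.prod_ite_eq' Finset.univ i (fun _ => (-1 : ℂ))]
      simp
    have hSij : S i j = 1 := by
      rw [hS, Matrix.mul_diagonal]
      have : P i j = 1 := by
        simp [hP, hσ, Equiv.Perm.permMatrix, PEquiv.toMatrix_apply, Equiv.toPEquiv_apply,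
          Equiv.swap_apply_left]
      rw [this, hw]
      simp [Ne.symm hij]
    have hc := hcomm S ⟨hSu, hSd⟩ i j
    rw [Finset.sum_eq_single j (fun b _ hb => by rw [hoff b j hb, mul_zero])
      (fun hj => absurd (Finset.mem_univ j) hj)] at hc
    rw [Finset.sum_eq_single i (fun b _ hb => by rw [hoff i b (Ne.symm hb), zero_mul])
      (fun hi => absurd (Finset.mem_univ i) hi)] at hc
    rw [hSij, one_mul, mul_one] at hc
    exact hc
  -- express ψ in the tensor basis
  let b := (Pi.basisFun ℂ (Fin d)).tensorProduct (Pi.basisFun ℂ (Fin d))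
  have hrepr : ∀ k l : Fin d, M k l = b.repr ψ (k, l) := by
    intro k l
    calc M k l = coeffL d k l (∑ p : Fin d × Fin d, b.repr ψ p • b p) := by
          rw [b.sum_repr ψ]
      _ = ∑ p : Fin d × Fin d, b.repr ψ p * coeffL d k l (b p) := by
          rw [map_sum]; exact Finset.sum_congr rfl fun p _ => by rw [_root_.map_smul, smul_eq_mul]
      _ = b.repr ψ (k, l) := by
          rw [Fintype.sum_prod_type]
          simp [b, Module.Basis.tensorProduct_apply', coeffL_tmul, Pi.basisFun_apply,
            Pi.single_apply, mul_ite, ite_mul, Finset.sum_ite_eq, Finset.sum_ite_eq']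
  rcases Nat.eq_zero_or_pos d with hd | hd
  · refine ⟨0, ?_⟩
    have h0 : ψ = 0 := by
      have := (b.sum_repr ψ).symm
      have he : (Finset.univ : Finset (Fin d × Fin d)) = ∅ := by
        subst hd; rfl
      rw [he, Finset.sum_empty] at this
      exact this
    simp [h0]
  · set i0 : Fin d := ⟨0, hd⟩ with hi0
    have hdiag : ∀ k : Fin d, M k k = M i0 i0 := by
      intro k
      rcases eq_or_ne k i0 with hk | hk
      · rw [hk]
      · exact hdiageq i0 k (Ne.symm hk)
    refine ⟨M i0 i0, ?_⟩
    calc ψ = ∑ p : Fin d × Fin d, b.repr ψ p • b p := (b.sum_repr ψ).symm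
      _ = ∑ k : Fin d, ∑ l : Fin d,
            M k l • ((Pi.single k (1:ℂ)) ⊗ₜ[ℂ] (Pi.single l (1:ℂ))) := by
          rw [Fintype.sum_prod_type]
          refine Finset.sum_congr rfl fun k _ => Finset.sum_congr rfl fun l _ => ?_
          rw [hrepr k l]
          simp [b, Module.Basis.tensorProduct_apply', Pi.basisFun_apply]
      _ = ∑ k : Fin d, M k k • ((Pi.single k (1:ℂ)) ⊗ₜ[ℂ] (Pi.single k (1:ℂ))) := by
          refine Finset.sum_congr rfl fun k _ => ?_
          rw [Finset.sum_eq_single k (fun l _ hlk => by rw [hoff k l (Ne.symm hlk), zero_smul])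
            (fun hk => absurd (Finset.mem_univ k) hk)]
      _ = M i0 i0 • ∑ k : Fin d, (Pi.single k (1:ℂ)) ⊗ₜ[ℂ] (Pi.single k (1:ℂ)) := by
          rw [Finset.smul_sum]
          exact Finset.sum_congr rfl fun k _ => by rw [hdiag k]
end

section
/- For any d ≥ 2 and any matrix A ∈ M_d(ℂ), if V·A = A·Vᵀ for all V ∈ SU(d), then A = 0. -/
/-!
Test the hypothesis on the monomial matrices `V = diag(u) P_σ` with unimodular `u` and
`sign σ * ∏ u = 1`, which lie in `SU(d)`. Entrywise, `V A = A Vᵀ` becomes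
`u p * A (σ p) q = A p (σ q) * u q`. The phases `u = (i, -i)` on two coordinates `p ≠ q`
(with `σ = 1`) give `i A p q = -i A p q`, so `A` is diagonal; with `σ` the transposition
of `p` and `q`, the phases `(1, -1)` and `(i, i)` give `A q q = -A p p` and `A q q = A p p`.
-/

open Matrix

open Equiv

namespace Matrix

variable {n R : Type*} [Fintype n] [DecidableEq n]

theorem diagonal_mul_permMatrix_mul_apply [Semiring R] (u : n → R) (σ : Perm n)
    (A : Matrix n n R) (p q : n) :
    (diagonal u * σ.permMatrix R * A) p q = u p * A (σ p) q := by
  rw [Matrix.mul_assoc, PEquiv.toMatrix_toPEquiv_mul, diagonal_mul, submatrix_apply, id]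

theorem mul_transpose_diagonal_mul_permMatrix_apply [CommSemiring R] (u : n → R) (σ : Perm n)
    (A : Matrix n n R) (p q : n) :
    (A * (diagonal u * σ.permMatrix R)ᵀ) p q = A p (σ q) * u q := by
  rw [transpose_mul, transpose_permMatrix, diagonal_transpose, ← Matrix.mul_assoc,
    PEquiv.mul_toMatrix_toPEquiv, mul_diagonal, submatrix_apply, id, Perm.inv_def, symm_symm]

variable [CommRing R]

theorem det_diagonal_mul_permMatrix (u : n → R) (σ : Perm n) :
    (diagonal u * σ.permMatrix R).det = Perm.sign σ * ∏ k, u k := by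
  rw [det_mul, det_diagonal, det_permutation, mul_comm]

variable [StarRing R]

theorem diagonal_mem_unitaryGroup {u : n → R} (hu : ∀ k, u k ∈ unitary R) :
    diagonal u ∈ unitaryGroup n R := by
  rw [mem_unitaryGroup_iff', star_eq_conjTranspose, diagonal_conjTranspose, diagonal_mul_diagonal,
    ← diagonal_one]
  exact congrArg diagonal (funext fun k => Unitary.star_mul_self_of_mem (hu k))

theorem permMatrix_mem_unitaryGroup (σ : Perm n) : σ.permMatrix R ∈ unitaryGroup n R := by
  rw [mem_unitaryGroup_iff', star_eq_conjTranspose, conjTranspose_permMatrix, ← permMatrix_mul,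
    mul_inv_cancel, permMatrix_one]

theorem entry_relation_of_forall_specialUnitary {A : Matrix n n R}
    (h : ∀ V ∈ unitaryGroup n R, V.det = 1 → V * A = A * Vᵀ) {u : n → R}
    (hu : ∀ k, u k ∈ unitary R) {σ : Perm n} (hdet : (Perm.sign σ : R) * ∏ k, u k = 1)
    (p q : n) : u p * A (σ p) q = A p (σ q) * u q := by
  have hV := h _ (mul_mem (diagonal_mem_unitaryGroup hu) (permMatrix_mem_unitaryGroup σ))
    (by rw [det_diagonal_mul_permMatrix, hdet])
  rw [← diagonal_mul_permMatrix_mul_apply, hV, mul_transpose_diagonal_mul_permMatrix_apply]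

end Matrix

theorem Pi.mulSingle_mul_mulSingle_apply_mem {M S : Type*} [CommMonoid M] [SetLike S M]
    [SubmonoidClass S M] {s : S} {n : Type*} [DecidableEq n] {a b : M} (ha : a ∈ s) (hb : b ∈ s)
    (i j k : n) : (Pi.mulSingle i a * Pi.mulSingle j b : n → M) k ∈ s := by
  rw [Pi.mul_apply, Pi.mulSingle_apply, Pi.mulSingle_apply]
  split_ifs <;> simp [ha, hb, mul_mem]

theorem Matrix.eq_zero_of_forall_specialUnitary_mul_eq_mul_transpose {n : Type*} [Fintype n]
    [DecidableEq n] [Nontrivial n] {A : Matrix n n ℂ}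
    (h : ∀ V ∈ unitaryGroup n ℂ, V.det = 1 → V * A = A * Vᵀ) : A = 0 := by
  have hI : Complex.I ∈ unitary ℂ := by simp [Unitary.mem_iff, Complex.conj_I]
  have hnegI : -Complex.I ∈ unitary ℂ := by simp [Unitary.mem_iff, Complex.conj_I]
  have hneg1 : (-1 : ℂ) ∈ unitary ℂ := by simp [Unitary.mem_iff]
  have rel {i j : n} (hij : i ≠ j) {a b : ℂ} (ha : a ∈ unitary ℂ) (hb : b ∈ unitary ℂ)
      {σ : Perm n} (hdet : (Perm.sign σ : ℂ) * (a * b) = 1) : a * A (σ i) j = A i (σ j) * b := by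
    simpa [hij, hij.symm] using entry_relation_of_forall_specialUnitary h
      (Pi.mulSingle_mul_mulSingle_apply_mem ha hb i j)
      (by simpa only [Pi.mul_apply, Finset.prod_mul_distrib, Fintype.prod_pi_mulSingle']) i j
  have off_diag {i j : n} (hij : i ≠ j) : A i j = 0 := by
    have h₁ : Complex.I * A i j = A i j * -Complex.I := rel hij hI hnegI (σ := 1) (by simp)
    simpa [Complex.I_ne_zero] using (by linear_combination h₁ : A i j * (2 * Complex.I) = 0)
  have diag (i : n) : A i i = 0 := by
    obtain ⟨j, hji⟩ := exists_ne i
    have h₁ := rel hji.symm (one_mem _) hneg1 (σ := Equiv.swap i j) (by simp [hji.symm])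
    have h₂ := rel hji.symm hI hI (σ := Equiv.swap i j) (by simp [hji.symm])
    rw [swap_apply_left, swap_apply_right] at h₁ h₂
    have h₃ : A j j = A i i := mul_left_cancel₀ Complex.I_ne_zero (h₂.trans (mul_comm _ _))
    linear_combination (h₁ - h₃) / 2
  ext i j
  rcases eq_or_ne i j with rfl | hij
  exacts [diag i, off_diag hij]

/-- For `d ≥ 2`, if `V * A = A * Vᵀ` for all `V ∈ SU(d)`, then `A = 0`. -/
theorem transpose_intertwiner_eq_zero (d : ℕ) (hd : 2 ≤ d)
    (A : Matrix (Fin d) (Fin d) ℂ) (h : ∀ V ∈ SU d, V * A = A * Vᵀ) :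
    A = 0 := by
  have : Nontrivial (Fin d) := Fin.nontrivial_iff_two_le.mpr hd
  exact eq_zero_of_forall_specialUnitary_mul_eq_mul_transpose fun V hV hdet => h V ⟨hV, hdet⟩
end

section
/- For a CSS stabilizer code on n qudits encoding k logical qudits, and any subset A of the qudits, the number g_X(A) of independent X-type logical operators supported on A and the number g_Z(A^c) of independent Z-type logical operators supported on the complement A^c satisfy g_X(A) + g_Z(A^c) = k. -/
open Matrix

/-- Vectors supported on a subset `A` of coordinates. -/
def suppSub (F : Type*) [Field F] (n : ℕ) (A : Set (Fin n)) :
    Submodule F (Fin n → F) where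
  carrier := {v | ∀ i, i ∉ A → v i = 0}
  add_mem' := by
    intro a b ha hb i hi
    simp [Pi.add_apply, ha i hi, hb i hi]
  zero_mem' := fun i _ => rfl
  smul_mem' := by
    intro c a ha i hi
    simp [Pi.smul_apply, ha i hi]

/-- Orthogonal complement with respect to the standard bilinear (dot product)
form. -/
def perpSub (F : Type*) [Field F] (n : ℕ) (W : Submodule F (Fin n → F)) :
    Submodule F (Fin n → F) where
  carrier := {v | ∀ w ∈ W, dotProduct v w = 0}
  add_mem' := by
    intro a b ha hb w hw
    simp [add_dotProduct, ha w hw, hb w hw]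
  zero_mem' := by
    intro w hw
    simp [zero_dotProduct]
  smul_mem' := by
    intro c a ha w hw
    simp [smul_dotProduct, ha w hw]

section aux

variable {F : Type*} [Field F] {n : ℕ}

lemma mem_perpSub {W : Submodule F (Fin n → F)} {v : Fin n → F} :
    v ∈ perpSub (F) n W ↔ ∀ w ∈ W, dotProduct v w = 0 := Iff.rfl

lemma mem_suppSub {A : Set (Fin n)} {v : Fin n → F} :
    v ∈ suppSub (F) n A ↔ ∀ i, i ∉ A → v i = 0 := Iff.rfl

lemma perpSub_sup (W1 W2 : Submodule F (Fin n → F)) :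
    perpSub (F) n (W1 ⊔ W2) = perpSub (F) n W1 ⊓ perpSub (F) n W2 := by
  apply le_antisymm
  · intro v hv
    exact ⟨fun w hw => hv w (Submodule.mem_sup_left hw),
      fun w hw => hv w (Submodule.mem_sup_right hw)⟩
  · rintro v ⟨h1, h2⟩ w hw
    rcases Submodule.mem_sup.mp hw with ⟨w1, hw1, w2, hw2, rfl⟩
    rw [dotProduct_add, h1 w1 hw1, h2 w2 hw2, add_zero]

lemma perpSub_suppSub (A : Set (Fin n)) :
    perpSub (F) n (suppSub (F) n A) = suppSub (F) n Aᶜ := by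
  apply le_antisymm
  · intro v hv i hi
    have hmem : (Pi.single i (1 : F)) ∈ suppSub (F) n A := by
      intro j hj
      have : j ≠ i := by
        rintro rfl; exact hj (by simpa using hi)
      simp [Pi.single_eq_of_ne this]
    have := hv _ hmem
    rwa [dotProduct_single, mul_one] at this
  · intro v hv w hw
    unfold dotProduct
    apply Finset.sum_eq_zero
    intro j _
    by_cases hj : j ∈ A
    · rw [hv j (by simpa using hj), zero_mul]
    · rw [hw j hj, mul_zero]

lemma toDual_eq_dot (v w : Fin n → F) :
    (Pi.basisFun F (Fin n)).toDual v w = dotProduct v w := by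
  have h := fun i => (Pi.basisFun F (Fin n)).toDual_apply_left v i
  -- express w in terms of basis
  have : ((Pi.basisFun F (Fin n)).toDual v) w
      = dotProduct v w := by
    have hw : w = ∑ i, w i • (Pi.basisFun F (Fin n)) i := by
      ext j
      simp [Pi.basisFun_apply, Pi.single_apply]
    conv_lhs => rw [hw]
    rw [map_sum]
    simp only [_root_.map_smul, smul_eq_mul]
    unfold dotProduct
    apply Finset.sum_congr rfl
    intro i _
    rw [h i]
    simp [Pi.basisFun_repr, mul_comm]
  exact this

lemma perpSub_eq_comap (W : Submodule F (Fin n → F)) :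
    perpSub (F) n W = W.dualAnnihilator.comap
      (Pi.basisFun F (Fin n)).toDualEquiv.toLinearMap := by
  ext v
  simp only [Submodule.mem_comap, LinearEquiv.coe_coe, Module.Basis.toDualEquiv_apply,
    Submodule.mem_dualAnnihilator, mem_perpSub]
  constructor
  · intro h w hw; rw [toDual_eq_dot]; exact h w hw
  · intro h w hw; rw [← toDual_eq_dot]; exact h w hw

lemma finrank_perpSub (W : Submodule F (Fin n → F)) :
    Module.finrank F (perpSub (F) n W) = n - Module.finrank F W := by
  rw [perpSub_eq_comap]
  have h1 : Module.finrank F (W.dualAnnihilator.comap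
      (Pi.basisFun F (Fin n)).toDualEquiv.toLinearMap)
      = Module.finrank F W.dualAnnihilator := by
    rw [Submodule.comap_equiv_eq_map_symm]
    exact LinearEquiv.finrank_map_eq (Pi.basisFun F (Fin n)).toDualEquiv.symm W.dualAnnihilator
  rw [h1]
  have h2 : Module.finrank F ((Fin n → F) ⧸ W) = Module.finrank F W.dualAnnihilator :=
    (Subspace.quotEquivAnnihilator W).finrank_eq
  rw [← h2]
  have h3 := Submodule.finrank_quotient_add_finrank W
  have h4 : Module.finrank F (Fin n → F) = n := by simp
  omega

end aux

/-- **Cleaning lemma for CSS codes.** For a CSS code on `n` qudits over `𝔽_p`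
given by classical codes `C2ᵖ ⊆ C1` (so that the number of logical qudits is
`k = dim C1 - dim C2ᵖ`), and any subset `A` of the qudits, the number
`g_X(A) = dim(C1 ∩ V_A) - dim(C2ᵖ ∩ V_A)` of independent X-type logical
operators supported on `A` and the number
`g_Z(Aᶜ) = dim(C2 ∩ V_{Aᶜ}) - dim(C1^⊥ ∩ V_{Aᶜ})` (with `C2 = (C2ᵖ)^⊥`) of
independent Z-type logical operators supported on `Aᶜ` satisfy
`g_X(A) + g_Z(Aᶜ) = k`. -/
theorem css_cleaning_lemma (p n : ℕ) [Fact p.Prime]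
    (C1 C2p : Submodule (ZMod p) (Fin n → ZMod p)) (hsub : C2p ≤ C1)
    (A : Set (Fin n)) :
    (Module.finrank (ZMod p) ↥(C1 ⊓ suppSub (ZMod p) n A)
        - Module.finrank (ZMod p) ↥(C2p ⊓ suppSub (ZMod p) n A))
      + (Module.finrank (ZMod p) ↥(perpSub (ZMod p) n C2p ⊓ suppSub (ZMod p) n Aᶜ)
        - Module.finrank (ZMod p) ↥(perpSub (ZMod p) n C1 ⊓ suppSub (ZMod p) n Aᶜ))
      = Module.finrank (ZMod p) ↥C1 - Module.finrank (ZMod p) ↥C2p := by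
  -- rewrite perp ⊓ supp as perp of sup
  have key : ∀ W : Submodule (ZMod p) (Fin n → ZMod p),
      perpSub (ZMod p) n W ⊓ suppSub (ZMod p) n Aᶜ = perpSub (ZMod p) n (W ⊔ suppSub (ZMod p) n A) := by
    intro W
    rw [perpSub_sup, perpSub_suppSub]
  rw [key C1, key C2p, finrank_perpSub, finrank_perpSub]
  have e1 := Submodule.finrank_sup_add_finrank_inf_eq C1 (suppSub (ZMod p) n A)
  have e2 := Submodule.finrank_sup_add_finrank_inf_eq C2p (suppSub (ZMod p) n A)
  have le1 : Module.finrank (ZMod p) ↥(C2p ⊓ suppSub (ZMod p) n A)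
      ≤ Module.finrank (ZMod p) ↥(C1 ⊓ suppSub (ZMod p) n A) :=
    Submodule.finrank_mono (inf_le_inf_right _ hsub)
  have le2 : Module.finrank (ZMod p) ↥(C2p ⊔ suppSub (ZMod p) n A)
      ≤ Module.finrank (ZMod p) ↥(C1 ⊔ suppSub (ZMod p) n A) :=
    Submodule.finrank_mono (sup_le_sup_right hsub _)
  have le3 : Module.finrank (ZMod p) ↥(C1 ⊔ suppSub (ZMod p) n A) ≤ n := by
    have := Submodule.finrank_le (C1 ⊔ suppSub (ZMod p) n A)
    simpa using this
  have le4 : Module.finrank (ZMod p) C2p ≤ Module.finrank (ZMod p) C1 :=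
    Submodule.finrank_mono hsub
  omega
end
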